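/- The map f ↦ Ψ_K(J_K f) = (J_K f) ∘ σ_K is a linear isometric embedding of (L^∞(K), ‖·‖_A) into (C_0([0, λ(K)]), ‖·‖_∞), where ‖f‖_A = sup_{x ∈ K} |J_K f(x)|. -/

import Mathlib

open MeasureTheory Set

/-- Measure projection `π_K`. -/
noncomputable def piProj (K : Set ℝ) (x : ℝ) : ℝ :=
  (volume (Set.Icc (sInf K) x ∩ K)).toReal

/-- Left-endpoint selector `σ_K`. -/
noncomputable def sigmaSel (K : Set ℝ) (t : ℝ) : ℝ :=
  sInf {x ∈ K | piProj K x = t}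

/-- Primitive `J_K f`. -/
noncomputable def JPrim (K : Set ℝ) (f : ℝ → ℝ) (x : ℝ) : ℝ :=
  ∫ y in Set.Icc (sInf K) x ∩ K, f y

/-- The map `f ↦ (J_K f) ∘ σ_K`. -/
noncomputable def embedA (K : Set ℝ) (f : ℝ → ℝ) (t : ℝ) : ℝ :=
  JPrim K f (sigmaSel K t)

/-!
`π_K` is a `1`-Lipschitz map of `[min K, max K]` onto `[0, λ(K)]`, and `J_K f` only depends on
`π_K`: `|J_K f y - J_K f x| ≤ ‖f‖_∞ |π_K y - π_K x|`, because `J_K f y - J_K f x` is the integral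
of `f` over `(x, y] ∩ K`, a set of measure `π_K y - π_K x`. As `π_K ∘ σ_K = id` on `[0, λ(K)]`, the function
`Ψ_K(J_K f)` is `‖f‖_∞`-Lipschitz, vanishes at `0`, and takes on `[0, λ(K)]` exactly the values
that `J_K f` takes on `K`, so the two suprema agree.
-/

/-- For `a ∉ s` the inner supremum is the junk value `sSup ∅ = 0`, harmless since `g ≥ 0`. -/
theorem Real.biSup_eq_sSup_image {α : Type*} {g : α → ℝ} (hg : ∀ a, 0 ≤ g a) (s : Set α) :
    ⨆ a ∈ s, g a = sSup (g '' s) := by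
  by_cases hb : BddAbove (g '' s)
  · rw [sSup_image']
    refine (ciSup_subtype_fun ?_ ?_).symm
    · rwa [← image_eq_range]
    · simpa using Real.iSup_nonneg fun a : s => hg a
  · rw [Real.sSup_of_not_bddAbove hb, cbiSup_of_not_bddAbove (by rwa [← image_eq_range]),
      Real.sSup_empty]

theorem Real.biSup_comp_eq_of_image_eq {α β γ : Type*} {φ : β → ℝ} (hφ : ∀ b, 0 ≤ φ b)
    {g : α → β} {g' : γ → β} {s : Set α} {s' : Set γ} (h : g '' s = g' '' s') :
    ⨆ a ∈ s, φ (g a) = ⨆ c ∈ s', φ (g' c) := by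
  rw [Real.biSup_eq_sSup_image (fun a => hφ (g a)), Real.biSup_eq_sSup_image (fun c => hφ (g' c)),
    ← image_image φ g s, ← image_image φ g' s', h]

section CumulativeIntegral

variable {μ : Measure ℝ} {f : ℝ → ℝ} {C x y : ℝ}

theorem setIntegral_Iic_eq_add (hf : Integrable f μ) (hxy : x ≤ y) :
    ∫ z in Iic y, f z ∂μ = ∫ z in Iic x, f z ∂μ + ∫ z in Ioc x y, f z ∂μ := by
  rw [← Iic_union_Ioc_eq_Iic hxy,
    setIntegral_union (Iic_disjoint_Ioc le_rfl) measurableSet_Ioc hf.integrableOn hf.integrableOn]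

variable [IsFiniteMeasure μ]

theorem measureReal_Iic_eq_add (hxy : x ≤ y) :
    μ.real (Iic y) = μ.real (Iic x) + μ.real (Ioc x y) := by
  rw [← Iic_union_Ioc_eq_Iic hxy, measureReal_union (Iic_disjoint_Ioc le_rfl) measurableSet_Ioc]

theorem abs_setIntegral_le (hC : ∀ᵐ z ∂μ, |f z| ≤ C) (s : Set ℝ) :
    |∫ z in s, f z ∂μ| ≤ C * μ.real s :=
  norm_setIntegral_le_of_norm_le_const_ae (f := f) (measure_lt_top μ s) (ae_restrict_of_ae hC)

theorem abs_setIntegral_Iic_sub_le (hf : Integrable f μ) (hC : ∀ᵐ z ∂μ, |f z| ≤ C)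
    (x y : ℝ) :
    |∫ z in Iic y, f z ∂μ - ∫ z in Iic x, f z ∂μ| ≤ C * |μ.real (Iic y) - μ.real (Iic x)| := by
  wlog hxy : x ≤ y generalizing x y
  · rw [abs_sub_comm, abs_sub_comm (μ.real _)]
    exact this y x (le_of_not_ge hxy)
  rw [setIntegral_Iic_eq_add hf hxy, measureReal_Iic_eq_add hxy, add_sub_cancel_left,
    add_sub_cancel_left, abs_of_nonneg measureReal_nonneg]
  exact abs_setIntegral_le hC _

theorem abs_measureReal_Iic_sub_le (hμ : μ ≤ volume) (x y : ℝ) :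
    |μ.real (Iic y) - μ.real (Iic x)| ≤ |y - x| := by
  wlog hxy : x ≤ y generalizing x y
  · rw [abs_sub_comm, abs_sub_comm y]
    exact this y x (le_of_not_ge hxy)
  rw [measureReal_Iic_eq_add hxy, add_sub_cancel_left, abs_of_nonneg measureReal_nonneg,
    abs_of_nonneg (sub_nonneg.2 hxy), ← Real.volume_real_Ioc_of_le hxy]
  exact ENNReal.toReal_mono measure_Ioc_lt_top.ne (hμ _)

end CumulativeIntegral

section Alexiewicz

variable {K : Set ℝ}

theorem Icc_sInf_inter_eq_Iic_inter (hK : BddBelow K) (x : ℝ) :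
    Icc (sInf K) x ∩ K = Iic x ∩ K := by
  ext z
  exact ⟨fun ⟨⟨_, hzx⟩, hz⟩ => ⟨hzx, hz⟩, fun ⟨hzx, hz⟩ => ⟨⟨csInf_le hK hz, hzx⟩, hz⟩⟩

theorem piProj_eq_measureReal_Iic (hK : BddBelow K) (x : ℝ) :
    piProj K x = (volume.restrict K).real (Iic x) := by
  rw [measureReal_restrict_apply measurableSet_Iic, ← Icc_sInf_inter_eq_Iic_inter hK]
  rfl

theorem JPrim_eq_setIntegral_Iic (hK : BddBelow K) (f : ℝ → ℝ) (x : ℝ) :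
    JPrim K f x = ∫ y in Iic x, f y ∂volume.restrict K := by
  rw [Measure.restrict_restrict measurableSet_Iic, ← Icc_sInf_inter_eq_Iic_inter hK]
  rfl

theorem lipschitzWith_piProj (hK : IsCompact K) : LipschitzWith 1 (piProj K) := by
  have := isFiniteMeasure_restrict.2 (hK.measure_lt_top (μ := volume)).ne
  refine LipschitzWith.of_dist_le_mul fun x y => ?_
  rw [NNReal.coe_one, one_mul, Real.dist_eq, Real.dist_eq,
    piProj_eq_measureReal_Iic hK.bddBelow, piProj_eq_measureReal_Iic hK.bddBelow]
  exact abs_measureReal_Iic_sub_le Measure.restrict_le_self y x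

theorem piProj_sInf (K : Set ℝ) : piProj K (sInf K) = 0 := by
  rw [piProj, Icc_self, measure_mono_null inter_subset_left (measure_singleton _),
    ENNReal.toReal_zero]

theorem piProj_sSup (hK : IsCompact K) : piProj K (sSup K) = volume.real K := by
  rw [piProj_eq_measureReal_Iic hK.bddBelow, measureReal_restrict_apply measurableSet_Iic,
    inter_eq_right.2 fun _ hx => mem_Iic.2 (le_csSup hK.bddAbove hx)]

theorem piProj_mem_Icc (hK : IsCompact K) (x : ℝ) : piProj K x ∈ Icc 0 (volume.real K) :=
  ⟨ENNReal.toReal_nonneg, measureReal_mono inter_subset_right (hK.measure_lt_top (μ := volume)).ne⟩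

theorem exists_mem_piProj_eq (hK : IsCompact K) (hne : K.Nonempty) {t : ℝ}
    (ht : t ∈ Icc 0 (volume.real K)) : ∃ x ∈ K, piProj K x = t := by
  have := isFiniteMeasure_restrict.2 (hK.measure_lt_top (μ := volume)).ne
  obtain ⟨c, hc, hct⟩ := intermediate_value_Icc (csInf_le_csSup hne hK.bddBelow hK.bddAbove)
    (lipschitzWith_piProj hK).continuous.continuousOn (by rwa [piProj_sInf, piProj_sSup hK])
  -- the last point of `K` left of `c` has the same level, as `(x, c]` misses `K`
  have hle : (K ∩ Iic c).Nonempty := ⟨sInf K, hK.isClosed.csInf_mem hne hK.bddBelow, hc.1⟩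
  have hbdd : BddAbove (K ∩ Iic c) := hK.bddAbove.mono inter_subset_left
  obtain ⟨hxK, hxc⟩ := (hK.isClosed.inter isClosed_Iic).csSup_mem hle hbdd
  have hgap : Ioc (sSup (K ∩ Iic c)) c ∩ K = ∅ :=
    eq_empty_of_forall_notMem fun z ⟨⟨hz, hzc⟩, hzK⟩ => (le_csSup hbdd ⟨hzK, hzc⟩).not_gt hz
  refine ⟨_, hxK, ?_⟩
  rw [← hct, piProj_eq_measureReal_Iic hK.bddBelow, piProj_eq_measureReal_Iic hK.bddBelow,
    measureReal_Iic_eq_add hxc, measureReal_restrict_apply measurableSet_Ioc, hgap,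
    measureReal_empty, add_zero]

theorem sigmaSel_mem_levelSet (hK : IsCompact K) (hne : K.Nonempty) {t : ℝ}
    (ht : t ∈ Icc 0 (volume.real K)) : sigmaSel K t ∈ {x ∈ K | piProj K x = t} :=
  (hK.isClosed.inter (isClosed_singleton.preimage (lipschitzWith_piProj hK).continuous)).csInf_mem
    (exists_mem_piProj_eq hK hne ht) (hK.bddBelow.mono fun _ hx => hx.1)

end Alexiewicz

section Primitive

variable {K : Set ℝ} {f : ℝ → ℝ}

theorem abs_JPrim_le (hK : IsCompact K) (hf : MemLp f ⊤ (volume.restrict K)) (x : ℝ) :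
    |JPrim K f x| ≤ lpNorm f ⊤ (volume.restrict K) * piProj K x := by
  have := isFiniteMeasure_restrict.2 (hK.measure_lt_top (μ := volume)).ne
  rw [JPrim_eq_setIntegral_Iic hK.bddBelow, piProj_eq_measureReal_Iic hK.bddBelow]
  exact abs_setIntegral_le (ae_le_lpNorm_exponent_top hf) _

theorem abs_JPrim_sub_le (hK : IsCompact K) (hf : MemLp f ⊤ (volume.restrict K)) (x y : ℝ) :
    |JPrim K f y - JPrim K f x| ≤
      lpNorm f ⊤ (volume.restrict K) * |piProj K y - piProj K x| := by
  have := isFiniteMeasure_restrict.2 (hK.measure_lt_top (μ := volume)).ne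
  rw [JPrim_eq_setIntegral_Iic hK.bddBelow, JPrim_eq_setIntegral_Iic hK.bddBelow,
    piProj_eq_measureReal_Iic hK.bddBelow, piProj_eq_measureReal_Iic hK.bddBelow]
  exact abs_setIntegral_Iic_sub_le (hf.integrable le_top) (ae_le_lpNorm_exponent_top hf) x y

theorem JPrim_eq_of_piProj_eq (hK : IsCompact K) (hf : MemLp f ⊤ (volume.restrict K)) {x y : ℝ}
    (h : piProj K x = piProj K y) : JPrim K f x = JPrim K f y := by
  have := abs_JPrim_sub_le hK hf x y
  rw [h, sub_self, abs_zero, mul_zero, abs_nonpos_iff, sub_eq_zero] at this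
  exact this.symm

theorem embedA_piProj (hK : IsCompact K) (hne : K.Nonempty) (hf : MemLp f ⊤ (volume.restrict K))
    (x : ℝ) : embedA K f (piProj K x) = JPrim K f x :=
  JPrim_eq_of_piProj_eq hK hf (sigmaSel_mem_levelSet hK hne (piProj_mem_Icc hK x)).2

theorem image_embedA (hK : IsCompact K) (hne : K.Nonempty) (hf : MemLp f ⊤ (volume.restrict K)) :
    embedA K f '' Icc 0 (volume.real K) = JPrim K f '' K := by
  refine Subset.antisymm ?_ ?_
  · rintro _ ⟨t, ht, rfl⟩
    exact ⟨_, (sigmaSel_mem_levelSet hK hne ht).1, rfl⟩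
  · rintro _ ⟨x, -, rfl⟩
    exact ⟨_, piProj_mem_Icc hK x, embedA_piProj hK hne hf x⟩

theorem lipschitzOnWith_embedA (hK : IsCompact K) (hne : K.Nonempty)
    (hf : MemLp f ⊤ (volume.restrict K)) :
    LipschitzOnWith (lpNorm f ⊤ (volume.restrict K)).toNNReal (embedA K f)
      (Icc 0 (volume.real K)) := by
  refine LipschitzOnWith.of_dist_le_mul fun s hs t ht => ?_
  have := abs_JPrim_sub_le hK hf (sigmaSel K t) (sigmaSel K s)
  rwa [(sigmaSel_mem_levelSet hK hne hs).2, (sigmaSel_mem_levelSet hK hne ht).2, ← Real.dist_eq,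
    ← Real.dist_eq, ← Real.coe_toNNReal _ lpNorm_nonneg] at this

theorem embedA_zero (hK : IsCompact K) (hne : K.Nonempty) (hf : MemLp f ⊤ (volume.restrict K)) :
    embedA K f 0 = 0 := by
  have := abs_JPrim_le hK hf (sigmaSel K 0)
  rw [(sigmaSel_mem_levelSet hK hne ⟨le_rfl, measureReal_nonneg⟩).2, mul_zero] at this
  exact abs_nonpos_iff.1 this

theorem embedA_add {g : ℝ → ℝ} (hf : IntegrableOn f K) (hg : IntegrableOn g K) (t : ℝ) :
    embedA K (f + g) t = embedA K f t + embedA K g t :=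
  integral_add (hf.mono_set inter_subset_right) (hg.mono_set inter_subset_right)

theorem embedA_smul (c : ℝ) (f : ℝ → ℝ) (t : ℝ) : embedA K (c • f) t = c * embedA K f t :=
  integral_smul c f

end Primitive

theorem stmt11 (K : Set ℝ) (hK : IsCompact K) (hpos : 0 < volume K) :
    -- lands in C_0([0, λ(K)])
    (∀ f : ℝ → ℝ, Measurable f → MemLp f ⊤ (volume.restrict K) →
      ContinuousOn (embedA K f) (Set.Icc (0 : ℝ) (volume K).toReal) ∧
      embedA K f 0 = 0) ∧
    -- linearity
    (∀ f g : ℝ → ℝ, Measurable f → Measurable g →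
      MemLp f ⊤ (volume.restrict K) → MemLp g ⊤ (volume.restrict K) →
      ∀ c : ℝ, ∀ t ∈ Set.Icc (0 : ℝ) (volume K).toReal,
        embedA K (f + g) t = embedA K f t + embedA K g t ∧
        embedA K (c • f) t = c * embedA K f t) ∧
    -- isometry: sup norm of the image equals the Alexiewicz norm of `f`
    (∀ f : ℝ → ℝ, Measurable f → MemLp f ⊤ (volume.restrict K) →
      (⨆ t ∈ Set.Icc (0 : ℝ) (volume K).toReal, |embedA K f t|) =
        ⨆ x ∈ K, |JPrim K f x|) := by
  have hne : K.Nonempty := nonempty_of_measure_ne_zero hpos.ne'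
  have := isFiniteMeasure_restrict.2 (hK.measure_lt_top (μ := volume)).ne
  refine ⟨fun f _ hf => ⟨(lipschitzOnWith_embedA hK hne hf).continuousOn, embedA_zero hK hne hf⟩,
    fun f g _ _ hf hg c t _ =>
      ⟨embedA_add (hf.integrable le_top) (hg.integrable le_top) t, embedA_smul c f t⟩,
    fun f _ hf => Real.biSup_comp_eq_of_image_eq abs_nonneg (image_embedA hK hne hf)⟩
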